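/- arXiv:1006.5262 — 7 statements merged into one kernel-verified Lean document; each statement's English description precedes it below -/
import Mathlib

section
/- Let a and b be coprime integers and let m be an integer with m > 1. Then there are infinitely many pairs ζ = (c, d) of integers such that c and d are coprime, m divides a + c, and m divides b + d. -/
/-- For coprime integers `a, b` and an integer `m > 1`, there are infinitely
many primitive pairs `ζ = (c, d)` with `m ∣ a + c` and `m ∣ b + d`. -/
theorem infinitely_many_primitive_pairs (a b m : ℤ) (hab : IsCoprime a b) (hm : 1 < m) :
    {ζ : ℤ × ℤ | IsCoprime ζ.1 ζ.2 ∧ m ∣ (a + ζ.1) ∧ m ∣ (b + ζ.2)}.Infinite := by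
  have hm0 : m ≠ 0 := by omega
  rcases eq_or_ne b 0 with hb | hb
  · have ha : a ≠ 0 := by
      rintro rfl
      subst hb
      exact not_isCoprime_zero_zero hab
    refine Set.infinite_of_injective_forall_mem
      (f := fun k : ℤ => ((-a, -b + a * (m * k * a)) : ℤ × ℤ)) ?_ ?_
    · intro x y hxy
      simp only [Prod.mk.injEq] at hxy
      exact mul_left_cancel₀ (mul_ne_zero (mul_ne_zero hm0 ha) ha)
        (by linear_combination hxy.2)
    · intro k
      refine ⟨?_, ⟨0, by ring⟩, ⟨k * a * a, by ring⟩⟩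
      have h1 : IsCoprime (-b + a * (m * k * a)) a := (hab.symm.neg_left.add_mul_left_left _)
      exact h1.symm.neg_left
  · refine Set.infinite_of_injective_forall_mem
      (f := fun k : ℤ => ((-a + b * (m * k * b), -b) : ℤ × ℤ)) ?_ ?_
    · intro x y hxy
      simp only [Prod.mk.injEq] at hxy
      exact mul_left_cancel₀ (mul_ne_zero (mul_ne_zero hm0 hb) hb)
        (by linear_combination hxy.1)
    · intro k
      refine ⟨?_, ⟨k * b * b, by ring⟩, ⟨0, by ring⟩⟩
      exact (hab.neg_left.add_mul_left_left _).neg_right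
end

section
/- Let a, b be coprime integers, let m be an integer with m > 1, and let P̃ be the additive subgroup of ℚ × ℚ generated by ℤ × ℤ together with the element (a/m, b/m). Let ζ = (c, d) ∈ ℤ × ℤ with c and d coprime, and suppose m divides a + c and m divides b + d. Then there exists a surjective additive group homomorphism φ : P̃ → (ℤ × ℤ)/⟨ζ⟩, where ⟨ζ⟩ denotes the cyclic subgroup of ℤ × ℤ generated by ζ, such that the restriction of φ to ℤ × ℤ ⊆ P̃ is the canonical quotient map and φ((a/m, b/m)) is the class of ((a + c)/m, (b + d)/m). -/
/-- The extended lattice `P̃ = ℤ×ℤ + ℤ·(a/m, b/m)` inside `ℚ × ℚ`. -/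
def extendedLattice (a b m : ℤ) : AddSubgroup (ℚ × ℚ) :=
  AddSubgroup.closure
    ({p : ℚ × ℚ | ∃ x y : ℤ, p = ((x : ℚ), (y : ℚ))} ∪ {(((a : ℚ) / m), ((b : ℚ) / m))})

/-- For coprime `a, b`, `m > 1`, and a primitive pair `ζ = (c, d)` with
`m ∣ a + c` and `m ∣ b + d`, there is a surjective homomorphism
`φ : P̃ → (ℤ×ℤ)/⟨ζ⟩` restricting to the canonical quotient map on `ℤ×ℤ` and sending
`(a/m, b/m)` to the class of `((a+c)/m, (b+d)/m)`. -/
theorem extended_lattice_epimorphism (a b m : ℤ) (hab : IsCoprime a b) (hm : 1 < m)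
    (c d : ℤ) (hcd : IsCoprime c d) (h1 : m ∣ a + c) (h2 : m ∣ b + d) :
    ∃ φ : extendedLattice a b m →+ (ℤ × ℤ) ⧸ AddSubgroup.zmultiples (c, d),
      Function.Surjective φ ∧
      (∀ (p : extendedLattice a b m) (x y : ℤ),
        (p : ℚ × ℚ) = ((x : ℚ), (y : ℚ)) →
          φ p = QuotientAddGroup.mk (x, y)) ∧
      (∀ p : extendedLattice a b m,
        (p : ℚ × ℚ) = (((a : ℚ) / m), ((b : ℚ) / m)) →
          φ p = QuotientAddGroup.mk ((a + c) / m, (b + d) / m)) := by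
  have hm0 : (m : ℚ) ≠ 0 := by
    exact_mod_cast (by omega : m ≠ 0)
  obtain ⟨e, he⟩ := h1
  obtain ⟨f, hf⟩ := h2
  -- the parametrization of P̃
  have gadd : ∀ z w : ℤ × ℤ × ℤ,
      ((((z.1+w.1 : ℤ) : ℚ)) + ((z.2.2+w.2.2 : ℤ) : ℚ) * a / m,
        (((z.2.1+w.2.1 : ℤ) : ℚ)) + ((z.2.2+w.2.2 : ℤ) : ℚ) * b / m) =
      (((z.1 : ℚ)) + (z.2.2 : ℚ) * a / m, ((z.2.1 : ℚ)) + (z.2.2 : ℚ) * b / m) +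
      (((w.1 : ℚ)) + (w.2.2 : ℚ) * a / m, ((w.2.1 : ℚ)) + (w.2.2 : ℚ) * b / m) := by
    intro z w
    simp only [Prod.mk_add_mk, Prod.mk.injEq]
    constructor <;> · push_cast; ring
  let g : ℤ × ℤ × ℤ →+ ℚ × ℚ := AddMonoidHom.mk'
    (fun z => (((z.1 : ℚ)) + (z.2.2 : ℚ) * a / m, ((z.2.1 : ℚ)) + (z.2.2 : ℚ) * b / m))
    (by intro z w; exact gadd z w)
  let j : ℤ × ℤ × ℤ →+ ℤ × ℤ := AddMonoidHom.mk'
    (fun z => (z.1 + z.2.2 * e, z.2.1 + z.2.2 * f))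
    (by intro z w; simp only [Prod.fst_add, Prod.snd_add, Prod.mk_add_mk, Prod.mk.injEq]
        constructor <;> ring)
  let h : ℤ × ℤ × ℤ →+ (ℤ × ℤ) ⧸ AddSubgroup.zmultiples (c, d) :=
    (QuotientAddGroup.mk' _).comp j
  have hg : ∀ z : ℤ × ℤ × ℤ, g z =
      (((z.1 : ℚ)) + (z.2.2 : ℚ) * a / m, ((z.2.1 : ℚ)) + (z.2.2 : ℚ) * b / m) := fun _ => rfl
  have hj : ∀ z : ℤ × ℤ × ℤ, j z = (z.1 + z.2.2 * e, z.2.1 + z.2.2 * f) := fun _ => rfl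
  have hh : ∀ z : ℤ × ℤ × ℤ, h z = QuotientAddGroup.mk (z.1 + z.2.2 * e, z.2.1 + z.2.2 * f) :=
    fun _ => rfl
  -- range of g is the extended lattice
  have hrange : g.range = extendedLattice a b m := by
    apply le_antisymm
    · rintro _ ⟨z, rfl⟩
      rw [hg]
      have hxy : ((((z.1 : ℚ)), ((z.2.1 : ℚ))) : ℚ × ℚ) ∈ extendedLattice a b m :=
        AddSubgroup.subset_closure (Or.inl ⟨z.1, z.2.1, rfl⟩)
      have hab' : ((((a : ℚ) / m), ((b : ℚ) / m)) : ℚ × ℚ) ∈ extendedLattice a b m :=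
        AddSubgroup.subset_closure (Or.inr rfl)
      have : (((z.1 : ℚ)) + (z.2.2 : ℚ) * a / m, ((z.2.1 : ℚ)) + (z.2.2 : ℚ) * b / m)
          = (((z.1 : ℚ)), ((z.2.1 : ℚ))) + z.2.2 • (((a : ℚ) / m), ((b : ℚ) / m)) := by
        simp only [Prod.smul_mk, Prod.mk_add_mk, Prod.mk.injEq, zsmul_eq_mul]
        constructor <;> ring
      rw [this]
      exact AddSubgroup.add_mem _ hxy (AddSubgroup.zsmul_mem _ hab' _)
    · rw [extendedLattice, AddSubgroup.closure_le]
      rintro p (⟨x, y, rfl⟩ | hp)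
      · exact ⟨(x, y, 0), by rw [hg]; simp⟩
      · rw [Set.mem_singleton_iff] at hp
        exact ⟨(0, 0, 1), by rw [hg, hp]; simp⟩
  -- kernel condition
  have hker : g.ker ≤ h.ker := by
    intro z hz
    obtain ⟨x, y, k⟩ := z
    rw [AddMonoidHom.mem_ker, hg, Prod.mk_eq_zero] at hz
    obtain ⟨hz1, hz2⟩ := hz
    simp only at hz1 hz2
    have e1 : x * m + k * a = 0 := by
      have : (x : ℚ) * m + k * a = 0 := by
        field_simp at hz1; linarith [hz1]
      exact_mod_cast this
    have e2 : y * m + k * b = 0 := by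
      have : (y : ℚ) * m + k * b = 0 := by
        field_simp at hz2; linarith [hz2]
      exact_mod_cast this
    obtain ⟨u, v, huv⟩ := hab
    set t : ℤ := -(u * x + v * y) with ht
    have hkt : k = m * t := by
      rw [ht]; linear_combination u * e1 + v * e2 - k * huv
    have hxe : x = -(t * a) := by
      have : x * m = -(t * a) * m := by rw [hkt] at e1; linarith [e1]
      have hm0' : m ≠ 0 := by omega
      exact mul_right_cancel₀ hm0' this
    have hye : y = -(t * b) := by
      have : y * m = -(t * b) * m := by rw [hkt] at e2; linarith [e2]
      have hm0' : m ≠ 0 := by omega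
      exact mul_right_cancel₀ hm0' this
    rw [AddMonoidHom.mem_ker, hh]
    rw [QuotientAddGroup.eq_zero_iff]
    refine ⟨t, ?_⟩
    simp only [Prod.smul_mk, smul_eq_mul, Prod.mk.injEq]
    constructor
    · linear_combination -hxe - e * hkt + t * he
    · linear_combination -hye - f * hkt + t * hf
  -- factor h through the range of g
  let H := QuotientAddGroup.lift g.ker h hker
  let E := QuotientAddGroup.quotientKerEquivRange g
  let ι : extendedLattice a b m →+ g.range := AddSubgroup.inclusion hrange.ge
  let φ : extendedLattice a b m →+ (ℤ × ℤ) ⧸ AddSubgroup.zmultiples (c, d) :=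
    H.comp ((E.symm.toAddMonoidHom).comp ι)
  have key : ∀ (z : ℤ × ℤ × ℤ) (p : extendedLattice a b m), (p : ℚ × ℚ) = g z → φ p = h z := by
    intro z p hp
    have h1' : ι p = ⟨g z, ⟨z, rfl⟩⟩ := Subtype.ext hp
    have h2' : E.symm ⟨g z, ⟨z, rfl⟩⟩ = QuotientAddGroup.mk z := by
      rw [AddEquiv.symm_apply_eq]
      rfl
    show H (E.symm (ι p)) = h z
    rw [h1', h2']
    rfl
  refine ⟨φ, ?_, ?_, ?_⟩
  · intro q
    obtain ⟨⟨x, y⟩, rfl⟩ := QuotientAddGroup.mk_surjective q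
    refine ⟨⟨g (x, y, 0), hrange ▸ ⟨(x, y, 0), rfl⟩⟩, ?_⟩
    rw [key (x, y, 0) _ rfl, hh]
    simp
  · intro p x y hp
    have : φ p = h (x, y, 0) := key (x, y, 0) p (by rw [hp, hg]; simp)
    rw [this, hh]; simp
  · intro p hp
    have : φ p = h (0, 0, 1) := key (0, 0, 1) p (by rw [hp, hg]; simp)
    rw [this, hh]
    have he' : (a + c) / m = e := by rw [he]; exact Int.mul_ediv_cancel_left e (by omega)
    have hf' : (b + d) / m = f := by rw [hf]; exact Int.mul_ediv_cancel_left f (by omega)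
    simp [he', hf']
end

section
/- Let p ≥ 1 be a natural number and let P be a p × p matrix with integer entries such that for every column index j, the sum over all rows i of |P_{ij}| is at most 3. Then every entry of the adjugate matrix of P has absolute value at most 3^(p−1). -/
/-- The absolute value of the determinant of an integer matrix is at most
the product of the column `ℓ¹`-norms. -/
lemma abs_det_le_prod_col_sum {n : ℕ} (M : Matrix (Fin n) (Fin n) ℤ) :
    |M.det| ≤ ∏ j, ∑ i, |M i j| := by
  rw [Matrix.det_apply]
  calc |∑ σ : Equiv.Perm (Fin n), Equiv.Perm.sign σ • ∏ i, M (σ i) i|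
      ≤ ∑ σ : Equiv.Perm (Fin n), |Equiv.Perm.sign σ • ∏ i, M (σ i) i| :=
        Finset.abs_sum_le_sum_abs _ _
    _ = ∑ σ : Equiv.Perm (Fin n), ∏ i, |M (σ i) i| := by
        refine Finset.sum_congr rfl fun σ _ => ?_
        rcases Int.units_eq_one_or (Equiv.Perm.sign σ) with hs | hs <;>
          simp [hs, Units.smul_def, Finset.abs_prod]
    _ ≤ ∑ f ∈ (Finset.univ : Finset (Fin n → Fin n)), ∏ i, |M (f i) i| := by
        have key : ∑ σ : Equiv.Perm (Fin n), ∏ i, |M (σ i) i|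
            = ∑ f ∈ Finset.univ.image (fun σ : Equiv.Perm (Fin n) => ⇑σ),
                ∏ i, |M (f i) i| := by
          refine (Finset.sum_image (f := fun f : Fin n → Fin n => ∏ i, |M (f i) i|) (g := fun σ : Equiv.Perm (Fin n) => (⇑σ : Fin n → Fin n)) ?_).symm
          intro σ _ τ _ hh
          exact Equiv.coe_fn_injective hh
        rw [key]
        refine Finset.sum_le_sum_of_subset_of_nonneg (Finset.subset_univ _) ?_
        intro f _ _
        exact Finset.prod_nonneg fun i _ => abs_nonneg _
    _ = ∏ j, ∑ i, |M i j| := by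
        rw [Finset.prod_univ_sum]
        simp [Fintype.piFinset_univ]

/-- If every column of a `p × p` integer matrix `P` (with `p ≥ 1`) has
absolute-value sum at most `3`, then every entry of the adjugate of `P` has absolute
value at most `3 ^ (p - 1)`. -/
theorem adjugate_entry_bound (p : ℕ) (hp : 1 ≤ p) (P : Matrix (Fin p) (Fin p) ℤ)
    (h : ∀ j, ∑ i, |P i j| ≤ 3) :
    ∀ i j, |P.adjugate i j| ≤ 3 ^ (p - 1) := by
  obtain ⟨n, rfl⟩ : ∃ n, p = n + 1 := ⟨p - 1, (Nat.succ_pred_eq_of_pos hp).symm⟩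
  intro i j
  rw [Matrix.adjugate_fin_succ_eq_det_submatrix, abs_mul, abs_pow, abs_neg, abs_one,
    one_pow, one_mul]
  calc |(P.submatrix j.succAbove i.succAbove).det|
      ≤ ∏ c, ∑ k, |P.submatrix j.succAbove i.succAbove k c| :=
        abs_det_le_prod_col_sum _
    _ ≤ ∏ _c : Fin n, (3 : ℤ) := by
        refine Finset.prod_le_prod (fun c _ => Finset.sum_nonneg fun k _ => abs_nonneg _)
          (fun c _ => ?_)
        have := h (i.succAbove c)
        rw [Fin.sum_univ_succAbove (fun k => |P k (i.succAbove c)|) j] at this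
        have h0 : (0 : ℤ) ≤ |P j (i.succAbove c)| := abs_nonneg _
        simp only [Matrix.submatrix_apply]
        omega
    _ = 3 ^ (n + 1 - 1) := by simp
end

section
/- Let p ≥ 1 and n be natural numbers, let P be a p × p integer matrix and Q a p × n integer matrix, and suppose that every column of P and every column of Q has entries whose absolute values sum to at most 3. Then every entry of the matrix product adj(P) · Q has absolute value at most 3^p. -/
/-! By Cramer's rule the `(i, j)` entry of `adj(P) * Q` is the determinant of `P` with its
`i`-th column replaced by the `j`-th column of `Q`. Expanding a determinant over permutations and
enlarging the sum to all maps `n → n` bounds its absolute value by the product of the column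
`ℓ¹`-norms, here by `3 ^ p`. -/

open Finset

namespace Matrix

theorem adjugate_mul_apply {n m α : Type*} [Fintype n] [DecidableEq n] [CommRing α]
    (A : Matrix n n α) (B : Matrix n m α) (i : n) (j : m) :
    (A.adjugate * B) i j = (A.updateCol i fun k => B k j).det := by
  rw [← cramer_apply, cramer_eq_adjugate_mulVec]
  rfl

variable {n R : Type*} [Fintype n] [DecidableEq n] [CommRing R] [LinearOrder R]

theorem sum_abs_updateCol_le (A : Matrix n n R) (b : n → R) (k : n) {c : R}
    (hA : ∀ j, ∑ i, |A i j| ≤ c) (hb : ∑ i, |b i| ≤ c) (j : n) :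
    ∑ i, |A.updateCol k b i j| ≤ c := by
  rcases eq_or_ne j k with rfl | hjk
  · simpa only [updateCol_self] using hb
  · simpa only [updateCol_ne hjk] using hA j

variable [IsStrictOrderedRing R]

theorem abs_det_le_prod_sum_abs_col (M : Matrix n n R) :
    |M.det| ≤ ∏ j, ∑ i, |M i j| := by
  let f : (n → n) → R := fun g => ∏ j, |M (g j) j|
  calc |M.det| ≤ ∑ σ : Equiv.Perm n, f σ := by
        rw [det_apply']
        refine (abs_sum_le_sum_abs _ _).trans (sum_le_sum fun σ _ => ?_)
        rw [abs_mul, abs_unit_intCast, one_mul, abs_prod]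
    _ = ∑ g ∈ univ.map ⟨fun σ : Equiv.Perm n => ⇑σ, DFunLike.coe_injective⟩, f g := by
        rw [sum_map]; rfl
    _ ≤ ∑ g, f g := sum_le_univ_sum_of_nonneg fun g => prod_nonneg fun j _ => abs_nonneg _
    _ = ∏ j, ∑ i, |M i j| := by rw [Fintype.prod_sum]

theorem abs_det_le_pow_of_sum_abs_col_le (M : Matrix n n R) {c : R}
    (hM : ∀ j, ∑ i, |M i j| ≤ c) : |M.det| ≤ c ^ Fintype.card n :=
  calc |M.det| ≤ ∏ j, ∑ i, |M i j| := abs_det_le_prod_sum_abs_col M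
    _ ≤ ∏ _j : n, c :=
        prod_le_prod (fun _ _ => sum_nonneg fun _ _ => abs_nonneg _) fun j _ => hM j
    _ = c ^ Fintype.card n := prod_const c

end Matrix

theorem adjugate_mul_entry_bound_general (p n : ℕ)
    (P : Matrix (Fin p) (Fin p) ℤ) (Q : Matrix (Fin p) (Fin n) ℤ)
    (hP : ∀ j, ∑ i, |P i j| ≤ 3) (hQ : ∀ j, ∑ i, |Q i j| ≤ 3) :
    ∀ i j, |(P.adjugate * Q) i j| ≤ 3 ^ p := by
  intro i j
  rw [Matrix.adjugate_mul_apply]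
  simpa only [Fintype.card_fin] using
    Matrix.abs_det_le_pow_of_sum_abs_col_le _ (Matrix.sum_abs_updateCol_le P _ i hP (hQ j))

/-- If every column of a `p × p` integer matrix `P` (`p ≥ 1`) and of a
`p × n` integer matrix `Q` has absolute-value sum at most `3`, then every entry of
`adj(P) · Q` has absolute value at most `3 ^ p`. -/
theorem adjugate_mul_entry_bound (p n : ℕ) (hp : 1 ≤ p)
    (P : Matrix (Fin p) (Fin p) ℤ) (Q : Matrix (Fin p) (Fin n) ℤ)
    (hP : ∀ j, ∑ i, |P i j| ≤ 3) (hQ : ∀ j, ∑ i, |Q i j| ≤ 3) :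
    ∀ i j, |(P.adjugate * Q) i j| ≤ 3 ^ p :=
  adjugate_mul_entry_bound_general p n P Q hP hQ
end

section
/- Let r, s, t be natural numbers and let A be an r × s integer matrix. Suppose there is a set S of row indices with |S| ≤ t such that: for every i ∈ S, the sum over columns j of |A_{ij}| is at most 3; and for every i ∉ S, the row A_i has exactly one nonzero entry, and that entry has absolute value 1 or 2. Let N be the quotient abelian group ℤ^s / R, where R is the subgroup of ℤ^s generated by the rows of A. Then every element of N of finite additive order has order at most 2 · 3^t. -/
/-!
Let `J` be the set of columns met by the rows outside `S`. Each such row is `a • eⱼ` with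
`a ∣ 2`, so `2 • ℤ^J ⊆ R`. Restricting to the columns outside `J` kills the rows outside `S`;
if `n • z ∈ R`, Cramer's rule on a nonsingular maximal square submatrix of the restricted
`S`-rows gives `M • z ∈ R + ℤ^J`, where `M` is the absolute value of that minor. By
`|det N| ≤ ∏ᵢ ∑ⱼ |Nᵢⱼ|` we get `0 < M ≤ 3 ^ |S|`, and `2M • z ∈ R`.
-/

open Finset

theorem Fintype.sum_comp_embedding_le {ι κ M : Type*} [Fintype ι] [Fintype κ] [AddCommMonoid M]
    [PartialOrder M] [IsOrderedAddMonoid M] (e : ι ↪ κ) {f : κ → M} (hf : ∀ j, 0 ≤ f j) :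
    ∑ i, f (e i) ≤ ∑ j, f j :=
  (sum_map _ e f).symm.trans_le (sum_le_univ_sum_of_nonneg fun j => hf j)

namespace Matrix

variable {ι : Type*} [Fintype ι] [DecidableEq ι]

theorem abs_det_le_prod_sum_abs {R : Type*} [CommRing R] [LinearOrder R] [IsStrictOrderedRing R]
    (M : Matrix ι ι R) : |M.det| ≤ ∏ i, ∑ j, |M i j| := by
  have hperm (σ : Equiv.Perm ι) :
      |((Equiv.Perm.sign σ : ℤ) : R) * ∏ i, Mᵀ (σ i) i| = ∏ i, |M i (σ i)| := by
    rw [abs_mul, abs_prod, ← Int.cast_abs, Int.isUnit_iff_abs_eq.mp (Equiv.Perm.sign σ).isUnit,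
      Int.cast_one, one_mul]
    rfl
  calc |M.det| = |∑ σ : Equiv.Perm ι, ((Equiv.Perm.sign σ : ℤ) : R) * ∏ i, Mᵀ (σ i) i| := by
        rw [← det_transpose, det_apply']
    _ ≤ ∑ σ : Equiv.Perm ι, ∏ i, |M i (σ i)| :=
        (abs_sum_le_sum_abs _ _).trans_eq (sum_congr rfl fun σ _ => hperm σ)
    _ ≤ ∑ p : ι → ι, ∏ i, |M i (p i)| :=
        Fintype.sum_comp_embedding_le ⟨((⇑) : Equiv.Perm ι → ι → ι), DFunLike.coe_injective⟩
          (f := fun p => ∏ i, |M i (p i)|) fun p => by positivity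
    _ = ∏ i, ∑ j, |M i j| := (Fintype.prod_sum fun i j => |M i j|).symm

theorem map_det_smul_eq_comp_vecMul_adjugate {R S : Type*} [CommRing R] [CommRing S]
    (f : R →+* S) (N : Matrix ι ι R) {q : ι → S} {w : ι → R} (h : q ᵥ* N.map f = f ∘ w) :
    f N.det • q = f ∘ (w ᵥ* N.adjugate) := by
  calc f N.det • q = q ᵥ* (N.map f * (N.map f).adjugate) := by
        rw [mul_adjugate, vecMul_smul, vecMul_one, f.map_det]; rfl
    _ = f ∘ (w ᵥ* N.adjugate) := by
        rw [← vecMul_vecMul, h]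
        funext i
        rw [Function.comp_apply, RingHom.map_vecMul, ← RingHom.mapMatrix_apply f N.adjugate,
          f.map_adjugate]
        rfl

theorem exists_det_submatrix_ne_zero {K m κ : Type*} [Field K] [Fintype m] [DecidableEq m]
    [Fintype κ] {B : Matrix m κ K} (hB : LinearIndependent K B.row) :
    ∃ c : m ↪ κ, (B.submatrix id c).det ≠ 0 := by
  have hspan : Submodule.span K (Set.range B.col) = ⊤ :=
    Submodule.eq_top_of_finrank_eq <| by
      rw [← rank_eq_finrank_span_cols, hB.rank_matrix, Module.finrank_fintype_fun_eq_card]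
  obtain ⟨J, c, hc, hJspan, hJ⟩ := exists_linearIndependent' K B.col
  let e : m ≃ J := (Pi.basisFun K m).indexEquiv (.mk hJ (by rw [hJspan, hspan]))
  refine ⟨e.toEmbedding.trans ⟨c, hc⟩, ?_⟩
  rw [← isUnit_iff_ne_zero, ← isUnit_iff_isUnit_det, ← linearIndependent_cols_iff_isUnit]
  exact hJ.comp e e.injective

end Matrix

open Matrix Submodule

theorem det_smul_mem_span_of_map_mem_span {R S m κ : Type*} [CommRing R] [CommRing S]
    [Fintype m] [DecidableEq m] {f : R →+* S} (hf : Function.Injective f) (β : m → κ → R)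
    (c : m → κ) {ξ : κ → R} (hξ : f ∘ ξ ∈ span S (Set.range fun v => f ∘ β v)) :
    (Matrix.of fun v u => β v (c u)).det • ξ ∈ span R (Set.range β) := by
  obtain ⟨q, hq⟩ := (mem_span_range_iff_exists_fun S).mp hξ
  set N := Matrix.of fun v u => β v (c u)
  have hcols : q ᵥ* N.map f = f ∘ (ξ ∘ c) := by
    funext u
    simpa [vecMul, dotProduct, N] using congrFun hq (c u)
  have hcramer := map_det_smul_eq_comp_vecMul_adjugate f N hcols
  have hcomb : N.det • ξ = ∑ v, ((ξ ∘ c) ᵥ* N.adjugate) v • β v := by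
    funext j
    apply hf
    have := congrFun hq j
    simp only [Finset.sum_apply, Pi.smul_apply, smul_eq_mul, Function.comp_apply] at this ⊢
    rw [map_sum, map_mul, ← this, Finset.mul_sum]
    refine Finset.sum_congr rfl fun v _ => ?_
    have hv := congrFun hcramer v
    simp only [Pi.smul_apply, smul_eq_mul, Function.comp_apply] at hv
    rw [map_mul, ← mul_assoc, ← hv]
  rw [hcomb]
  exact sum_mem fun v _ => smul_mem _ _ (subset_span ⟨v, rfl⟩)

theorem intCast_comp_mem_span_of_nsmul_mem_span {ι κ K : Type*} [Field K] [CharZero K]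
    (β : ι → κ → ℤ) {ξ : κ → ℤ} {n : ℕ} (hn : n ≠ 0) (h : n • ξ ∈ span ℤ (Set.range β)) :
    Int.castRingHom K ∘ ξ ∈ span K (Set.range fun i => Int.castRingHom K ∘ β i) := by
  let castL : (κ → ℤ) →ₗ[ℤ] (κ → K) := (Int.castRingHom K).toIntAlgHom.toLinearMap.compLeft κ
  have hmap := span_le_restrictScalars ℤ K _ <| by
    simpa only [map_span, ← Set.range_comp] using mem_map_of_mem (f := castL) h
  rw [map_nsmul, ← Nat.cast_smul_eq_nsmul K] at hmap
  exact (smul_mem_iff _ (Nat.cast_ne_zero.mpr hn)).mp hmap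

theorem exists_smul_mem_span_le_prod_sum_abs {ι κ : Type*} [Fintype ι] [Fintype κ]
    (β : ι → κ → ℤ) {ξ : κ → ℤ} {n : ℕ} (hn : n ≠ 0) (hξ : n • ξ ∈ span ℤ (Set.range β)) :
    ∃ I : Finset ι, (∀ i ∈ I, β i ≠ 0) ∧ ∃ M : ℕ, 0 < M ∧
      (M : ℤ) ≤ ∏ i ∈ I, ∑ j, |β i j| ∧ M • ξ ∈ span ℤ (Set.range β) := by
  classical
  let f := Int.castRingHom ℚ
  obtain ⟨J, a, ha, hspan, hli⟩ := exists_linearIndependent' ℚ fun i => f ∘ β i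
  have : Fintype J := Fintype.ofInjective a ha
  obtain ⟨c, hc⟩ := exists_det_submatrix_ne_zero (B := Matrix.of fun v => f ∘ β (a v)) hli
  set N := Matrix.of fun v u => β (a v) (c u)
  have hdet : N.det ≠ 0 := ne_zero_of_map (f := f) <| by rwa [f.map_det]
  have hN : N.det • ξ ∈ span ℤ (Set.range β) := by
    refine span_mono (Set.range_comp_subset_range a β) ?_
    refine det_smul_mem_span_of_map_mem_span f.injective_int (β ∘ a) c ?_
    have hξq := intCast_comp_mem_span_of_nsmul_mem_span (K := ℚ) β hn hξ
    rwa [← hspan] at hξq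
  refine ⟨Finset.univ.map ⟨a, ha⟩, ?_, N.det.natAbs, Int.natAbs_pos.mpr hdet, ?_, ?_⟩
  · simp only [Finset.mem_map, Finset.mem_univ, true_and, Function.Embedding.coeFn_mk,
      forall_exists_index, forall_apply_eq_imp_iff]
    intro v hv
    exact hli.ne_zero v (by simp [hv])
  · rw [Int.natCast_natAbs, Finset.prod_map]
    refine (abs_det_le_prod_sum_abs N).trans <| Finset.prod_le_prod (fun _ _ => by positivity)
      fun v _ => ?_
    exact Fintype.sum_comp_embedding_le c fun j => abs_nonneg (β (a v) j)
  · rw [← natCast_zsmul, Int.natCast_natAbs]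
    rcases abs_choice N.det with h | h <;> rw [h]
    · exact hN
    · rw [neg_smul]; exact neg_mem hN

theorem Submodule.smul_mem_of_map_mem {R M N : Type*} [Ring R] [AddCommGroup M] [AddCommGroup N]
    [Module R M] [Module R N] (f : M →ₗ[R] N) {p : Submodule R M} {k : R}
    (hker : ∀ y ∈ LinearMap.ker f, k • y ∈ p) {z : M} (hz : f z ∈ p.map f) : k • z ∈ p := by
  obtain ⟨w, hw, hwz⟩ := hz
  have hzw : z - w ∈ LinearMap.ker f := by rw [LinearMap.mem_ker, map_sub, hwz, sub_self]
  simpa [smul_sub] using add_mem (hker _ hzw) (p.smul_mem k hw)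

theorem smul_mem_span_of_forall_ne_zero_exists_single {R m κ : Type*} [CommRing R] [Fintype κ]
    [DecidableEq κ] (A : m → κ → R) {k : R} {y : κ → R}
    (hy : ∀ j, y j ≠ 0 → ∃ i a, A i = Pi.single j a ∧ a ∣ k) : k • y ∈ span R (Set.range A) := by
  rw [← Finset.univ_sum_single y, Finset.smul_sum]
  refine sum_mem fun j _ => ?_
  by_cases hj : y j = 0
  · simp [hj]
  obtain ⟨i, a, hi, b, rfl⟩ := hy j hj
  rw [← Pi.single_smul', smul_eq_mul, mul_assoc, mul_comm, ← smul_eq_mul, Pi.single_smul', ← hi]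
  exact smul_mem _ _ (subset_span ⟨i, rfl⟩)

theorem eq_single_and_dvd_two {κ : Type*} [DecidableEq κ] {v : κ → ℤ}
    (hv : ∃ j, (|v j| = 1 ∨ |v j| = 2) ∧ ∀ j', j' ≠ j → v j' = 0) {j : κ} (hj : v j ≠ 0) :
    v = Pi.single j (v j) ∧ v j ∣ 2 := by
  obtain ⟨j₀, habs, hzero⟩ := hv
  obtain rfl : j = j₀ := by_contra fun h => hj (hzero j h)
  refine ⟨funext fun j' => ?_, ?_⟩
  · by_cases h : j' = j
    · subst h; simp
    · simp [h, hzero j' h]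
  · rw [← abs_dvd]
    rcases habs with h | h <;> simp [h]

theorem exists_nsmul_mem_span_le_pow {m κ : Type*} [Fintype m] [Fintype κ] [DecidableEq κ]
    (A : m → κ → ℤ) (S : Finset m) {B : ℤ} (hB : 1 ≤ B) (k : ℕ)
    (hS : ∀ i ∈ S, ∑ j, |A i j| ≤ B)
    (hSc : ∀ i ∉ S, ∀ j, A i j ≠ 0 → A i = Pi.single j (A i j) ∧ A i j ∣ k)
    {z : κ → ℤ} {n : ℕ} (hn : n ≠ 0) (hz : n • z ∈ span ℤ (Set.range A)) :
    ∃ M : ℕ, 0 < M ∧ (M : ℤ) ≤ B ^ S.card ∧ (k * M) • z ∈ span ℤ (Set.range A) := by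
  classical
  let J : Set κ := {j | ∃ i ∉ S, A i j ≠ 0}
  let π := LinearMap.funLeft ℤ ℤ (Subtype.val : ↥Jᶜ → κ)
  have hπ : (span ℤ (Set.range A)).map π = span ℤ (Set.range fun i => π (A i)) := by
    rw [map_span, ← Set.range_comp]; rfl
  obtain ⟨I, hI, M, hM, hMle, hMz⟩ := exists_smul_mem_span_le_prod_sum_abs (fun i => π (A i)) hn
    (by rw [← hπ, ← map_nsmul π]; exact mem_map_of_mem hz)
  have hIS : I ⊆ S := fun i hi => by_contra fun hiS =>
    hI i hi (funext fun j => by_contra fun h => j.2 ⟨i, hiS, h⟩)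
  refine ⟨M, hM, ?_, ?_⟩
  · calc (M : ℤ) ≤ ∏ i ∈ I, ∑ j, |π (A i) j| := hMle
      _ ≤ ∏ i ∈ I, B := Finset.prod_le_prod (fun _ _ => by positivity) fun i hi =>
          ((Fintype.sum_comp_embedding_le (.subtype _) fun j => abs_nonneg (A i j))).trans
            (hS i (hIS hi))
      _ = B ^ I.card := Finset.prod_const B
      _ ≤ B ^ S.card := pow_le_pow_right₀ hB (Finset.card_le_card hIS)
  · rw [mul_nsmul', ← natCast_zsmul]
    refine smul_mem_of_map_mem π (fun y hy => ?_) (by rw [hπ, map_nsmul π]; exact hMz)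
    refine smul_mem_span_of_forall_ne_zero_exists_single _ fun j hyj => ?_
    obtain ⟨i, hiS, hij⟩ : j ∈ J := by_contra fun hj => hyj (congrFun hy ⟨j, hj⟩)
    exact ⟨i, _, hSc i hiS j hij⟩

/-- Let `A` be an `r × s` integer matrix such that at most `t` rows have
absolute-value sum at most `3` and every other row has exactly one nonzero entry, of
absolute value `1` or `2`. Then every finite-order element of the abelian group
`ℤ^s / (row space of A)` has order at most `2 · 3 ^ t`. -/
theorem cokernel_torsion_bound (r s t : ℕ) (A : Matrix (Fin r) (Fin s) ℤ)
    (S : Finset (Fin r)) (hS : S.card ≤ t)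
    (h1 : ∀ i ∈ S, ∑ j, |A i j| ≤ 3)
    (h2 : ∀ i ∉ S, ∃ j, (|A i j| = 1 ∨ |A i j| = 2) ∧ ∀ j', j' ≠ j → A i j' = 0) :
    ∀ x : (Fin s → ℤ) ⧸ AddSubgroup.closure (Set.range fun i => A i),
      IsOfFinAddOrder x → addOrderOf x ≤ 2 * 3 ^ t := by
  intro x hx
  obtain ⟨z, rfl⟩ := QuotientAddGroup.mk_surjective x
  have hmem (m : ℕ) : m • (z : (Fin s → ℤ) ⧸ AddSubgroup.closure (Set.range fun i => A i)) = 0 ↔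
      m • z ∈ span ℤ (Set.range A) := by
    rw [← QuotientAddGroup.mk_nsmul, QuotientAddGroup.eq_zero_iff, ← span_int_eq_addSubgroupClosure]
    rfl
  obtain ⟨M, hM, hM3, hMz⟩ := exists_nsmul_mem_span_le_pow A S (B := 3) (by norm_num) 2 h1
    (fun i hi j hij => by exact_mod_cast eq_single_and_dvd_two (h2 i hi) hij)
    hx.addOrderOf_pos.ne' ((hmem _).mp (addOrderOf_nsmul_eq_zero _))
  calc addOrderOf _ ≤ 2 * M := addOrderOf_le_of_nsmul_eq_zero (by omega) ((hmem _).mpr hMz)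
    _ ≤ 2 * 3 ^ t := Nat.mul_le_mul_left 2 <| by
        exact_mod_cast hM3.trans (pow_le_pow_right₀ (by norm_num) hS)
end

section
/- Let A be a finitely generated abelian group, W ≤ A a subgroup, g : A → ℤ an additive homomorphism, and h : W → ℤ × ℤ an additive homomorphism such that the first coordinate of h(w) equals g(w) for every w ∈ W. Let m be a positive integer divisible by the order of every finite-order element of the quotient group A/W. Then there exists an additive homomorphism ψ : A → ℚ × ℚ such that ψ(w) = h(w) for all w ∈ W (under the embedding ℤ × ℤ ⊆ ℚ × ℚ), the first coordinate of ψ(a) equals g(a) for all a ∈ A, and m times the second coordinate of ψ(a) is an integer for all a ∈ A. -/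
/-- Let `A` be a finitely generated abelian group, `W ≤ A`,
`g : A → ℤ` and `h : W → ℤ × ℤ` homomorphisms with `(h w).1 = g w` on `W`, and `m > 0`
divisible by the order of every finite-order element of `A/W`. Then there is a
homomorphism `ψ : A → ℚ × ℚ` extending `h`, with first coordinate `g`, and whose
second coordinate lies in `(1/m)ℤ`. -/
theorem lifting_homomorphism {A : Type*} [AddCommGroup A] (hA : AddGroup.FG A)
    (W : AddSubgroup A) (g : A →+ ℤ) (h : W →+ ℤ × ℤ)
    (hfst : ∀ w : W, (h w).1 = g w)
    (m : ℕ) (hm : 0 < m)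
    (hdiv : ∀ x : A ⧸ W, IsOfFinAddOrder x → (addOrderOf x : ℕ) ∣ m) :
    ∃ ψ : A →+ ℚ × ℚ,
      (∀ w : W, ψ (w : A) = (((h w).1 : ℚ), ((h w).2 : ℚ))) ∧
      (∀ a : A, (ψ a).1 = (g a : ℚ)) ∧
      (∀ a : A, ∃ k : ℤ, (m : ℚ) * (ψ a).2 = (k : ℚ)) := by
  classical
  -- B = {a | m • a ∈ W}
  set B : AddSubgroup A :=
    { carrier := {a : A | m • a ∈ W}
      zero_mem' := by simpa using W.zero_mem
      add_mem' := fun {a b} ha hb => by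
        simp only [Set.mem_setOf_eq, smul_add] at *
        exact W.add_mem ha hb
      neg_mem' := fun {a} ha => by
        simp only [Set.mem_setOf_eq, smul_neg] at *
        exact W.neg_mem ha } with hB
  have hBmem : ∀ a : A, a ∈ B ↔ m • a ∈ W := fun a => Iff.rfl
  -- key: if n • a ∈ B for some n ≠ 0 then a ∈ B
  have hkey : ∀ (a : A) (n : ℕ), n ≠ 0 → n • a ∈ B → a ∈ B := by
    intro a n hn hna
    rw [hBmem] at hna ⊢
    set x : A ⧸ W := QuotientAddGroup.mk a with hx
    have hfo : IsOfFinAddOrder x := by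
      rw [isOfFinAddOrder_iff_nsmul_eq_zero]
      refine ⟨m * n, Nat.mul_pos hm (Nat.pos_of_ne_zero hn), ?_⟩
      have : ((m * n) • a : A) ∈ W := by
        rw [mul_smul]; exact hna
      rwa [hx, ← QuotientAddGroup.mk_nsmul, QuotientAddGroup.eq_zero_iff]
    have := hdiv x hfo
    have hmx : m • x = 0 := by
      rwa [addOrderOf_dvd_iff_nsmul_eq_zero] at this
    rwa [hx, ← QuotientAddGroup.mk_nsmul, QuotientAddGroup.eq_zero_iff] at hmx
  have hWB : ∀ w : A, w ∈ W → w ∈ B := fun w hw => by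
    rw [hBmem]; exact nsmul_mem hw m
  -- the quotient A ⧸ B is finite and torsion-free over ℤ
  haveI := hA
  have hfin : Module.Finite ℤ (A ⧸ B) := by
    rw [Module.Finite.iff_addGroup_fg]
    exact AddGroup.fg_of_surjective (QuotientAddGroup.mk'_surjective B)
  have htf : NoZeroSMulDivisors ℤ (A ⧸ B) := by
    constructor
    intro c x hcx
    by_cases hc : c = 0
    · exact Or.inl hc
    · right
      obtain ⟨a, rfl⟩ := QuotientAddGroup.mk'_surjective B x
      have h1 : (c.natAbs : ℤ) • (QuotientAddGroup.mk' B a) = 0 := by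
        rcases Int.natAbs_eq c with hc' | hc'
        · rw [← hc']; exact hcx
        · rw [show ((c.natAbs : ℤ)) = -c by omega, neg_smul, hcx, neg_zero]
      rw [natCast_zsmul, ← map_nsmul] at h1
      have hmem : (c.natAbs) • a ∈ B := (QuotientAddGroup.eq_zero_iff _).mp h1
      have : a ∈ B := hkey a c.natAbs (Int.natAbs_ne_zero.mpr hc) hmem
      exact (QuotientAddGroup.eq_zero_iff _).mpr this
  -- A ⧸ B is free, hence projective: split the quotient map
  have hfree : Module.Free ℤ (A ⧸ B) := Module.free_of_finite_type_torsion_free'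
  let π : A →ₗ[ℤ] (A ⧸ B) := (QuotientAddGroup.mk' B).toIntLinearMap
  have hπ : Function.Surjective π := QuotientAddGroup.mk'_surjective B
  obtain ⟨s, hs⟩ := Module.projective_lifting_property π (LinearMap.id) hπ
  -- retraction r : A →+ B, a ↦ a - s (π a)
  have hrmem : ∀ a : A, a - s (π a) ∈ B := by
    intro a
    have : π (a - s (π a)) = 0 := by
      rw [map_sub]
      have : π (s (π a)) = π a := LinearMap.congr_fun hs (π a)
      rw [this, sub_self]
    exact (QuotientAddGroup.eq_zero_iff _).mp this
  let r : A →+ B := AddMonoidHom.mk' (fun a => ⟨a - s (π a), hrmem a⟩)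
    (by
      intro a b
      apply Subtype.ext
      simp only [AddSubgroup.coe_add, map_add]
      abel)
  -- ι : B →+ W, b ↦ m • b
  let ι : B →+ W := AddMonoidHom.mk' (fun b => ⟨m • (b : A), b.2⟩)
    (by
      intro a b
      apply Subtype.ext
      simp [smul_add])
  -- φ : A →+ ℤ , a ↦ h₂ (m • (a - s π a))
  let φ : A →+ ℤ := ((AddMonoidHom.snd ℤ ℤ).comp h).comp (ι.comp r)
  -- value of φ on W
  have hφW : ∀ w : W, φ (w : A) = m • (h w).2 := by
    intro w
    have hwB : (w : A) ∈ B := hWB w w.2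
    have hπw : π (w : A) = 0 := (QuotientAddGroup.eq_zero_iff _).mpr hwB
    have hr : r (w : A) = ⟨(w : A), hwB⟩ := by
      apply Subtype.ext
      simp only [r, AddMonoidHom.mk'_apply, hπw, map_zero, sub_zero]
    have hι : ι (r (w : A)) = m • w := by
      rw [hr]
      apply Subtype.ext
      simp [ι]
    simp only [φ, AddMonoidHom.comp_apply, hι, map_nsmul]
    rfl
  -- build ψ
  have hmQ : (m : ℚ) ≠ 0 := Nat.cast_ne_zero.mpr hm.ne'
  refine ⟨AddMonoidHom.prod ((Int.castAddHom ℚ).comp g)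
      ((AddMonoidHom.mk' (fun n : ℤ => (n : ℚ) / m)
        (by intro a b; push_cast; ring)).comp φ), ?_, ?_, ?_⟩
  · intro w
    have h2 : φ (w : A) = m * (h w).2 := by rw [hφW w]; simp [smul_eq_mul]
    simp only [AddMonoidHom.prod_apply, AddMonoidHom.comp_apply, Int.coe_castAddHom,
      AddMonoidHom.mk'_apply, h2, hfst w]
    refine Prod.ext rfl ?_
    push_cast
    field_simp
  · intro a
    simp
  · intro a
    refine ⟨φ a, ?_⟩
    simp only [AddMonoidHom.prod_apply, AddMonoidHom.comp_apply, AddMonoidHom.mk'_apply]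
    field_simp
end

section
/- Let m be a positive integer and let p, q be coprime integers. Let H be the additive subgroup of ℚ × ℚ consisting of all pairs (a/m, b) with a, b ∈ ℤ. Then the greatest positive integer k for which there exists v ∈ H with k·v = (p, q) is gcd(m, |q|); that is, gcd(m, |q|) belongs to the set {k ∈ ℕ : k ≥ 1 and ∃ v ∈ H, k·v = (p, q)} and is an upper bound for it. -/
/-!
A vector `k • (a/m, b)` equals `(p, q)` exactly when `k * a = p * m` and `k * b = q`. Hence `k`
divides `q`, so `k` is coprime to `p` and must divide `m`; conversely any common divisor `k`
of `m` and `q` gives the root `(p * (m / k) / m, q / k)`. The admissible `k` are therefore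
the positive common divisors of `m` and `q`, the largest of which is `gcd(m, q)`.
-/

theorem exists_zsmul_eq_of_dvd {m k : ℤ} (p q : ℤ) (hm : m ≠ 0) (hkm : k ∣ m) (hkq : k ∣ q) :
    ∃ v : ℚ × ℚ, (∃ a b : ℤ, v.1 = (a : ℚ) / m ∧ v.2 = (b : ℚ)) ∧
      k • v = ((p : ℚ), (q : ℚ)) := by
  obtain ⟨m', rfl⟩ := hkm
  obtain ⟨q', rfl⟩ := hkq
  have hk : (k : ℚ) ≠ 0 := by exact_mod_cast left_ne_zero_of_mul hm
  have hm' : (m' : ℚ) ≠ 0 := by exact_mod_cast right_ne_zero_of_mul hm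
  refine ⟨((p * m' : ℤ) / (k * m' : ℤ), q'), ⟨p * m', q', rfl, rfl⟩, ?_⟩
  rw [Prod.smul_mk, Prod.mk.injEq, zsmul_eq_mul, zsmul_eq_mul]
  push_cast
  constructor <;> field_simp

theorem dvd_of_nsmul_eq {m p q a b : ℤ} {k : ℕ} (hm : m ≠ 0) (hpq : IsCoprime p q)
    (h : k • ((a : ℚ) / m, (b : ℚ)) = ((p : ℚ), (q : ℚ))) :
    (k : ℤ) ∣ m ∧ (k : ℤ) ∣ q := by
  have hm' : (m : ℚ) ≠ 0 := by exact_mod_cast hm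
  rw [Prod.smul_mk, Prod.mk.injEq, nsmul_eq_mul, nsmul_eq_mul] at h
  obtain ⟨h₁, h₂⟩ := h
  have hka : (k : ℤ) * a = m * p := by
    field_simp at h₁
    exact_mod_cast h₁
  have hkq : (k : ℤ) ∣ q := ⟨b, by exact_mod_cast h₂.symm⟩
  have hpk : IsCoprime p k := hpq.of_isCoprime_of_dvd_right hkq
  exact ⟨hpk.symm.dvd_of_dvd_mul_right ⟨a, hka.symm⟩, hkq⟩

/-- For `m > 0` and coprime integers `p, q`, the greatest positive integer
`k` such that `(p, q)` is `k` times an element of `H = (1/m)ℤ × ℤ ⊆ ℚ × ℚ` is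
`gcd(m, |q|)`. -/
theorem maximal_root_in_extended_lattice (m p q : ℤ) (hm : 0 < m) (hpq : IsCoprime p q) :
    Int.gcd m q ∈ {k : ℕ | 1 ≤ k ∧ ∃ v : ℚ × ℚ,
        (∃ a b : ℤ, v.1 = (a : ℚ) / m ∧ v.2 = (b : ℚ)) ∧ k • v = ((p : ℚ), (q : ℚ))} ∧
    ∀ k ∈ {k : ℕ | 1 ≤ k ∧ ∃ v : ℚ × ℚ,
        (∃ a b : ℤ, v.1 = (a : ℚ) / m ∧ v.2 = (b : ℚ)) ∧ k • v = ((p : ℚ), (q : ℚ))},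
      k ≤ Int.gcd m q := by
  have hgcd : 0 < Int.gcd m q := Int.gcd_pos_of_ne_zero_left q hm.ne'
  refine ⟨⟨hgcd, ?_⟩, ?_⟩
  · obtain ⟨v, hv, hkv⟩ :=
      exists_zsmul_eq_of_dvd p q hm.ne' (Int.gcd_dvd_left m q) (Int.gcd_dvd_right m q)
    exact ⟨v, hv, by rwa [← natCast_zsmul]⟩
  · rintro k ⟨-, ⟨_, _⟩, ⟨a, b, rfl, rfl⟩, hkv⟩
    obtain ⟨hkm, hkq⟩ := dvd_of_nsmul_eq hm.ne' hpq hkv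
    exact Nat.le_of_dvd hgcd (Int.natCast_dvd_natCast.mp (Int.dvd_coe_gcd hkm hkq))
end
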